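/- For k ≥ 2 even, the partition λ = 1^k (k parts all equal to 1) satisfies |λ^{⊥B}| > |μ^{⊥B}| for every partition μ with k parts that are not all equal. For k ≥ 5 odd, the partition λ = 2·1^{k−1} (one part equal to 2 and k−1 parts equal to 1) satisfies |λ^{⊥B}| ≥ |μ^{⊥B}| for every partition μ with k parts. -/

import Mathlib

/-! Identify a sign vector with the set `S` of its `+1` coordinates: it is orthogonal to `v` iff
`2 * ∑_{i ∈ S} v i = ∑ i, v i`. For positive `v` these balanced sets form an antichain closed under
complement.

For even `k`, Sperner's theorem bounds them by `k.choose (k / 2)`, the count for `1^k`; a balanced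
set off the middle layer makes the LYM inequality strict, and if the whole middle layer is balanced,
then exchanging one element of a middle set shows that `v` is constant.

For odd `k = 2t + 1`, complementation pairs the balanced sets of size at most `t` with the others,
and those small sets form an intersecting antichain, since disjoint `S`, `T` would give `S ⊂ Tᶜ`.
Pushing its lowest layers up (upward local LYM keeps the size) reduces to the `t`-uniform case,
where Erdős–Ko–Rado gives `(2t).choose (t - 1)`: the count of `t`-sets through the part `2` of
`2·1^(k-1)`. -/

open scoped BigOperators Classical

namespace P2834

/-- The ±1 value associated to a Boolean. -/
def signVal (b : Bool) : ℤ := if b then 1 else -1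

/-- The Bernoulli ±1 matrix built from a Boolean matrix. -/
def bmat {n : ℕ} (B : Fin n → Fin n → Bool) : Matrix (Fin n) (Fin n) ℤ :=
  fun i j => signVal (B i j)

/-- Probability of an event under the uniform distribution on `n × n` ±1 matrices. -/
noncomputable def Pr (n : ℕ) (E : Matrix (Fin n) (Fin n) ℤ → Prop) : ℝ :=
  (Finset.filter (fun B : Fin n → Fin n → Bool => E (bmat B)) Finset.univ).card / 2 ^ (n * n)

/-- Expectation of a real-valued function of a uniformly random `n × n` ±1 matrix. -/
noncomputable def Ex (n : ℕ) (f : Matrix (Fin n) (Fin n) ℤ → ℝ) : ℝ :=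
  (∑ B : Fin n → Fin n → Bool, f (bmat B)) / 2 ^ (n * n)

/-- `lam : Fin k → ℤ` is an integer partition with `k` parts:
nonincreasing, all parts at least 1. -/
def IsPartition {k : ℕ} (lam : Fin k → ℤ) : Prop :=
  (∀ i j : Fin k, i ≤ j → lam j ≤ lam i) ∧ ∀ i, 1 ≤ lam i

/-- The Bernoulli orthogonal complement of `v`: sign vectors (encoded as Boolean
vectors, `true ↦ +1`, `false ↦ -1`) orthogonal to `v`. -/
def perpB {k : ℕ} (v : Fin k → ℤ) : Finset (Fin k → Bool) :=
  Finset.filter (fun x => ∑ i, v i * signVal (x i) = 0) Finset.univ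

/-- `r_λ := |λ^{⊥B}| / 2^k`. -/
def rVal {k : ℕ} (lam : Fin k → ℤ) : ℚ := (perpB lam).card / 2 ^ k

/-- `V_λ`: all vectors obtained by permuting the parts of `λ` and attaching ± signs,
with the first coordinate positive. -/
def Vlam {k : ℕ} (lam : Fin k → ℤ) : Set (Fin k → ℤ) :=
  {v | (∃ (σ : Equiv.Perm (Fin k)) (ε : Fin k → ℤ),
          (∀ i, ε i = 1 ∨ ε i = -1) ∧ ∀ i, v i = ε i * lam (σ i)) ∧
        ∀ h : 0 < k, 0 < v ⟨0, h⟩}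

/-- `V_λ^{(n)}`: vectors of length `n` of template `λ`, obtained from elements of
`V_λ` by inserting `n - k` zero coordinates (via an order-preserving coordinate
injection). -/
def VlamN {k : ℕ} (lam : Fin k → ℤ) (n : ℕ) : Set (Fin n → ℤ) :=
  {w | ∃ (c : Fin k ↪o Fin n) (u : Fin k → ℤ), u ∈ Vlam lam ∧
        (∀ i, w (c i) = u i) ∧ ∀ j, (∀ i, c i ≠ j) → w j = 0}

/-- `μ` reduces to `λ` (`μ ⇒ λ`): there are a `k`-element subset `I` of the `m`
coordinates (given by an order embedding) and `v ∈ V_λ` with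
`Proj_I μ^{⊥B} ⊆ v^{⊥B}`.  (When `k = m` the only order embedding is the identity,
recovering the case `μ^{⊥B} ⊆ v^{⊥B}`.) -/
def Reduces {m k : ℕ} (mu : Fin m → ℤ) (lam : Fin k → ℤ) : Prop :=
  ∃ (I : Fin k ↪o Fin m) (v : Fin k → ℤ), v ∈ Vlam lam ∧
    ∀ x ∈ perpB mu, (fun i => x (I i)) ∈ perpB v

/-- Equivalence of templates: reduction in both directions. -/
def Equivp {m k : ℕ} (mu : Fin m → ℤ) (lam : Fin k → ℤ) : Prop :=
  Reduces mu lam ∧ Reduces lam mu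

/-- Strict reduction: `μ ⇒ λ` but not `λ ⇒ μ`. -/
def StrictReduces {m k : ℕ} (mu : Fin m → ℤ) (lam : Fin k → ℤ) : Prop :=
  Reduces mu lam ∧ ¬ Reduces lam mu

/-- Lexicographic comparison of integer vectors. -/
def lexLE {k : ℕ} (a b : Fin k → ℤ) : Prop :=
  a = b ∨ ∃ i, (∀ j, j < i → a j = b j) ∧ a i < b i

/-- A partition is novel iff it does not strictly reduce to any partition, and it is
lexicographically first among all partitions equivalent to it. -/
def Novel {k : ℕ} (lam : Fin k → ℤ) : Prop :=
  IsPartition lam ∧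
  (∀ (m : ℕ) (mu : Fin m → ℤ), IsPartition mu → ¬ StrictReduces lam mu) ∧
  (∀ mu : Fin k → ℤ, IsPartition mu → Equivp lam mu → lexLE lam mu)

/-- The event that `M` has a right null vector of template `λ`. -/
def Rev {k : ℕ} (lam : Fin k → ℤ) (n : ℕ) (M : Matrix (Fin n) (Fin n) ℤ) : Prop :=
  ∃ v ∈ VlamN lam n, M.mulVec v = 0

/-- The event that `M` has a left null vector of template `λ`. -/
def Lev {k : ℕ} (lam : Fin k → ℤ) (n : ℕ) (M : Matrix (Fin n) (Fin n) ℤ) : Prop :=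
  ∃ v ∈ VlamN lam n, Matrix.vecMul v M = 0

/-- `D_λ := R_λ ∪ L_λ`. -/
def Dev {k : ℕ} (lam : Fin k → ℤ) (n : ℕ) (M : Matrix (Fin n) (Fin n) ℤ) : Prop :=
  Rev lam n M ∨ Lev lam n M

/-- The partition `1^k`. -/
def onesP (k : ℕ) : Fin k → ℤ := fun _ => 1

/-- The partition `2·1^(k-1)`. -/
def twoOnesP (k : ℕ) : Fin k → ℤ := fun i => if i.val = 0 then 2 else 1

open Finset
open scoped FinsetFamily

theorem choose_lt_middle_of_ne {n r : ℕ} (hn : Even n) (hrn : r ≤ n) (hr : r ≠ n / 2) :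
    n.choose r < n.choose (n / 2) := by
  have lt_of_lt_half : ∀ {s}, s < n / 2 → n.choose s < n.choose (n / 2) := fun {s} hs =>
    calc n.choose s < n.choose (s + 1) := by
          have h := Nat.choose_succ_right_eq n s
          have hpos := Nat.choose_pos (show s ≤ n by omega)
          by_contra! hle
          nlinarith [show s + 1 < n - s by omega]
      _ ≤ n.choose (n / 2) := Nat.choose_le_middle _ _
  rcases Nat.lt_or_gt_of_ne hr with h | h
  · exact lt_of_lt_half h
  · rw [← Nat.choose_symm hrn]
    obtain ⟨m, rfl⟩ := hn
    exact lt_of_lt_half (by omega)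

theorem card_lt_choose_half_of_isAntichain {α : Type*} [Fintype α] {𝒜 : Finset (Finset α)}
    (h𝒜 : IsAntichain (· ⊆ ·) (𝒜 : Set (Finset α)))
    {s : Finset α} (hs : s ∈ 𝒜)
    (hlt : (Fintype.card α).choose #s < (Fintype.card α).choose (Fintype.card α / 2)) :
    #𝒜 < (Fintype.card α).choose (Fintype.card α / 2) := by
  set n := Fintype.card α
  have hmid : (0 : ℚ) < n.choose (n / 2) := Nat.cast_pos.2 (Nat.choose_pos (Nat.div_le_self _ _))
  have h := calc
    ∑ _t ∈ 𝒜, (n.choose (n / 2) : ℚ)⁻¹ < ∑ t ∈ 𝒜, (n.choose #t : ℚ)⁻¹ := by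
      refine sum_lt_sum (fun t _ => ?_) ⟨s, hs, ?_⟩
      · gcongr
        · exact Nat.cast_pos.2 (Nat.choose_pos t.card_le_univ)
        · exact Nat.choose_le_middle _ _
      · gcongr
        exact Nat.cast_pos.2 (Nat.choose_pos s.card_le_univ)
    _ ≤ 1 := lubell_yamamoto_meshalkin_inequality_sum_inv_choose h𝒜
  rw [sum_const, nsmul_eq_mul, mul_inv_lt_iff₀ hmid, one_mul] at h
  exact_mod_cast h

theorem card_le_card_upShadow {α : Type*} [Fintype α] [DecidableEq α] {𝒜 : Finset (Finset α)}
    {ℓ : ℕ} (h𝒜 : (𝒜 : Set (Finset α)).Sized ℓ)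
    (hℓ : 2 * ℓ < Fintype.card α) : #𝒜 ≤ #(∂⁺ 𝒜) := by
  have hc : (𝒜ᶜˢ : Set (Finset α)).Sized (Fintype.card α - ℓ) := by
    simpa using h𝒜.compls
  have h := local_lubell_yamamoto_meshalkin_inequality_mul hc
  rw [shadow_compls, card_compls, card_compls,
    show Fintype.card α - (Fintype.card α - ℓ) + 1 = ℓ + 1 by omega] at h
  exact Nat.le_of_mul_le_mul_right
    (calc #𝒜 * (ℓ + 1) ≤ #𝒜 * (Fintype.card α - ℓ) := Nat.mul_le_mul_left _ (by omega)
      _ ≤ #(∂⁺ 𝒜) * (ℓ + 1) := h) (Nat.succ_pos ℓ)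

theorem exists_push_up_lowest_slice {α : Type*} [Fintype α] [DecidableEq α]
    {𝒜 : Finset (Finset α)} {ℓ : ℕ} (h𝒜 : IsAntichain (· ⊆ ·) (𝒜 : Set (Finset α)))
    (hinter : (𝒜 : Set (Finset α)).Intersecting) (hlow : ∀ A ∈ 𝒜, ℓ ≤ #A)
    (hℓ : 2 * ℓ < Fintype.card α) :
    ∃ ℬ : Finset (Finset α), #ℬ = #𝒜 ∧ IsAntichain (· ⊆ ·) (ℬ : Set (Finset α)) ∧
      (ℬ : Set (Finset α)).Intersecting ∧ ∀ B ∈ ℬ, (B ∈ 𝒜 ∧ #B ≠ ℓ) ∨ #B = ℓ + 1 := by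
  set ℱ := 𝒜 # ℓ
  have hℱ : ℱ ⊆ 𝒜 := slice_subset
  obtain ⟨𝒢, h𝒢, h𝒢card⟩ := exists_subset_card_eq (card_le_card_upShadow sized_slice hℓ)
  have card_new : ∀ U ∈ 𝒢, #U = ℓ + 1 := fun U hU => sized_slice.upShadow (h𝒢 hU)
  have above : ∀ U ∈ 𝒢, ∃ S ∈ 𝒜, #S = ℓ ∧ S ⊆ U := fun U hU => by
    obtain ⟨S, hS, hSU, -⟩ := mem_upShadow_iff_exists_mem_card_add_one.1 (h𝒢 hU)
    exact ⟨S, slice_subset hS, (mem_slice.1 hS).2, hSU⟩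
  have new : ∀ U ∈ 𝒢, U ∉ 𝒜 := fun U hU hU𝒜 => by
    obtain ⟨S, hS, hSℓ, hSU⟩ := above U hU
    exact h𝒜 hS hU𝒜 (by have := card_new U hU; rintro rfl; omega) hSU
  have old : ∀ A ∈ 𝒜 \ ℱ, A ∈ 𝒜 ∧ #A ≠ ℓ := fun A hA => by
    obtain ⟨hA, hAℱ⟩ := mem_sdiff.1 hA
    exact ⟨hA, fun h => hAℱ (mem_slice.2 ⟨hA, h⟩)⟩
  have contains : ∀ B ∈ (𝒜 \ ℱ) ∪ 𝒢, ∃ S ∈ 𝒜, S ⊆ B := fun B hB => by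
    rcases mem_union.1 hB with hB | hB
    · exact ⟨B, (old B hB).1, subset_rfl⟩
    · obtain ⟨S, hS, -, hSB⟩ := above B hB
      exact ⟨S, hS, hSB⟩
  refine ⟨(𝒜 \ ℱ) ∪ 𝒢, ?_, ?_, ?_, ?_⟩
  · have hdisj : Disjoint (𝒜 \ ℱ) 𝒢 :=
      disjoint_right.2 fun U hU hU' => new U hU (mem_sdiff.1 hU').1
    rw [card_union_of_disjoint hdisj, card_sdiff_of_subset hℱ, h𝒢card,
      Nat.sub_add_cancel (card_le_card hℱ)]
  · intro A hA B hB hAB hAB'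
    have hlt := card_lt_card (hAB'.ssubset_of_ne hAB)
    rcases mem_union.1 hA with hA | hA <;> rcases mem_union.1 hB with hB | hB
    · exact h𝒜 (old A hA).1 (old B hB).1 hAB hAB'
    · have := hlow A (old A hA).1
      have := (old A hA).2
      have := card_new B hB
      omega
    · obtain ⟨S, hS, hSℓ, hSA⟩ := above A hA
      exact h𝒜 hS (old B hB).1 (by rintro rfl; exact (old S hB).2 hSℓ) (hSA.trans hAB')
    · have := card_new A hA
      have := card_new B hB
      omega
  · intro A hA B hB hdisj
    obtain ⟨S, hS, hSA⟩ := contains A hA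
    obtain ⟨T, hT, hTB⟩ := contains B hB
    exact hinter hS hT (hdisj.mono hSA hTB)
  · intro B hB
    rcases mem_union.1 hB with hB | hB
    · exact Or.inl (old B hB)
    · exact Or.inr (card_new B hB)

theorem card_le_choose_of_isAntichain_of_intersecting {n r : ℕ} {𝒜 : Finset (Finset (Fin n))}
    (h𝒜 : IsAntichain (· ⊆ ·) (𝒜 : Set (Finset (Fin n))))
    (hinter : (𝒜 : Set (Finset (Fin n))).Intersecting) (hsize : ∀ A ∈ 𝒜, #A ≤ r)
    (hr : 0 < r) (hrn : r ≤ n / 2) : #𝒜 ≤ (n - 1).choose (r - 1) := by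
  suffices ∀ d, ∀ 𝒜 : Finset (Finset (Fin n)), IsAntichain (· ⊆ ·) (𝒜 : Set (Finset (Fin n))) →
      (𝒜 : Set (Finset (Fin n))).Intersecting → (∀ A ∈ 𝒜, #A ≤ r ∧ r ≤ #A + d) →
      #𝒜 ≤ (n - 1).choose (r - 1) from
    this r 𝒜 h𝒜 hinter fun A hA => ⟨hsize A hA, by omega⟩
  intro d
  induction d with
  | zero =>
    intro 𝒜 _ hinter hsize
    exact erdos_ko_rado hinter (fun A hA => by have := hsize A hA; omega) hrn
  | succ d ih =>
    intro 𝒜 h𝒜 hinter hsize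
    obtain ⟨ℬ, hcard, hℬ, hinterℬ, hℬsize⟩ := exists_push_up_lowest_slice (ℓ := r - (d + 1))
      h𝒜 hinter (fun A hA => by have := hsize A hA; omega) (by simp only [Fintype.card_fin]; omega)
    refine hcard ▸ ih ℬ hℬ hinterℬ fun B hB => ?_
    rcases hℬsize B hB with ⟨hB𝒜, hBℓ⟩ | hBℓ
    · have := hsize B hB𝒜
      omega
    · omega

def balancedSets {k : ℕ} (v : Fin k → ℤ) : Finset (Finset (Fin k)) :=
  univ.filter fun S => 2 * ∑ i ∈ S, v i = ∑ i, v i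

theorem sum_mul_signVal {k : ℕ} (v : Fin k → ℤ) (x : Fin k → Bool) :
    ∑ i, v i * signVal (x i) = 2 * ∑ i ∈ univ.filter (x · = true), v i - ∑ i, v i := by
  have hsign : ∀ b, signVal b = 2 * (if b = true then 1 else 0) - 1 := by decide
  simp only [hsign, mul_sub, mul_one, sum_sub_distrib, mul_ite, mul_zero, sum_ite,
    sum_const_zero, add_zero, ← sum_mul]
  ring

theorem card_perpB_eq_card_balancedSets {k : ℕ} (v : Fin k → ℤ) :
    #(perpB v) = #(balancedSets v) := by
  refine card_nbij' (fun x => univ.filter (x · = true)) (fun S i => decide (i ∈ S))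
    (fun x hx => ?_) (fun S hS => ?_) (fun x _ => ?_) (fun S _ => ?_)
  · simp only [perpB, balancedSets, coe_filter, mem_univ, true_and, Set.mem_ofPred_eq,
      sum_mul_signVal] at hx ⊢
    omega
  · simp only [perpB, balancedSets, coe_filter, mem_univ, true_and, Set.mem_ofPred_eq,
      sum_mul_signVal, decide_eq_true_eq, filter_mem_eq_inter, univ_inter] at hS ⊢
    omega
  · funext i
    simp
  · ext i
    simp

theorem mem_balancedSets {k : ℕ} {v : Fin k → ℤ} {S : Finset (Fin k)} :
    S ∈ balancedSets v ↔ 2 * ∑ i ∈ S, v i = ∑ i, v i := by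
  simp [balancedSets]

theorem compl_mem_balancedSets {k : ℕ} {v : Fin k → ℤ} {S : Finset (Fin k)}
    (hS : S ∈ balancedSets v) : Sᶜ ∈ balancedSets v := by
  rw [mem_balancedSets] at hS ⊢
  linarith [sum_add_sum_compl S v]

theorem isAntichain_balancedSets {k : ℕ} {v : Fin k → ℤ} (hv : ∀ i, 0 < v i) :
    IsAntichain (· ⊆ ·) (balancedSets v : Set (Finset (Fin k))) := by
  intro S hS T hT hne hST
  rw [mem_coe, mem_balancedSets] at hS hT
  obtain ⟨i, hiT, hiS⟩ := exists_of_ssubset (hST.ssubset_of_ne hne)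
  have := sum_lt_sum_of_subset hST hiT hiS (hv i) fun j _ _ => (hv j).le
  omega

theorem eq_of_forall_card_eq_mem_balancedSets {k r : ℕ} {v : Fin k → ℤ} (hr : 0 < r)
    (hrk : r < k) (h : ∀ S : Finset (Fin k), #S = r → S ∈ balancedSets v) (i j : Fin k) :
    v i = v j := by
  obtain rfl | hij := eq_or_ne i j
  · rfl
  obtain ⟨S, hS, hScard⟩ := exists_subset_card_eq (s := (univ.erase i).erase j) (n := r - 1)
    (by rw [card_erase_of_mem (by simpa using hij.symm), card_erase_of_mem (mem_univ i),
      card_univ, Fintype.card_fin]; omega)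
  have hi : i ∉ S := fun hiS => by simpa using hS hiS
  have hj : j ∉ S := fun hjS => by simpa using hS hjS
  have hiS := mem_balancedSets.1 (h (insert i S) (by rw [card_insert_of_notMem hi]; omega))
  have hjS := mem_balancedSets.1 (h (insert j S) (by rw [card_insert_of_notMem hj]; omega))
  rw [sum_insert hi] at hiS
  rw [sum_insert hj] at hjS
  omega

theorem card_perpB_lt_choose_half {k : ℕ} (hk : Even k) {v : Fin k → ℤ} (hv : ∀ i, 0 < v i)
    (hne : ∃ i j, v i ≠ v j) : #(perpB v) < k.choose (k / 2) := by
  obtain ⟨i, j, hij⟩ := hne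
  have hk2 : 2 ≤ k := by
    obtain ⟨m, rfl⟩ := hk
    have := i.pos
    omega
  rw [card_perpB_eq_card_balancedSets]
  by_contra! hge
  have hmid : ∀ S ∈ balancedSets v, #S = k / 2 := by
    intro S hS
    by_contra hS'
    have hlt := card_lt_choose_half_of_isAntichain (isAntichain_balancedSets hv) hS
    simp only [Fintype.card_fin] at hlt
    exact (hlt (choose_lt_middle_of_ne hk (card_le_univ S |>.trans_eq (Fintype.card_fin k))
      hS')).not_ge hge
  have heq : balancedSets v = powersetCard (k / 2) univ :=
    eq_of_subset_of_card_le (fun S hS => mem_powersetCard_univ.2 (hmid S hS)) (by simpa using hge)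
  exact hij (eq_of_forall_card_eq_mem_balancedSets (r := k / 2) (by omega) (by omega)
    (fun S hS => heq ▸ mem_powersetCard_univ.2 hS) i j)

theorem choose_half_le_card_perpB_onesP {k : ℕ} (hk : Even k) :
    k.choose (k / 2) ≤ #(perpB (onesP k)) := by
  rw [card_perpB_eq_card_balancedSets]
  calc k.choose (k / 2) = #(powersetCard (k / 2) (univ : Finset (Fin k))) := by simp
    _ ≤ _ := card_le_card fun S hS => by
      obtain ⟨m, rfl⟩ := hk
      simp only [mem_balancedSets, onesP, sum_const, card_univ, Fintype.card_fin,
        mem_powersetCard_univ.1 hS, nsmul_eq_mul, mul_one]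
      omega

theorem card_balancedSets_eq_two_mul {k : ℕ} (hk : Odd k) (v : Fin k → ℤ) :
    #(balancedSets v) = 2 * #((balancedSets v).filter fun S => 2 * #S < k) := by
  have hcompl : ∀ S : Finset (Fin k), #Sᶜ = k - #S := fun S => by simp [card_compl]
  have hle : ∀ S : Finset (Fin k), #S ≤ k := fun S => card_le_univ S |>.trans_eq (by simp)
  have hkmod := Nat.odd_iff.1 hk
  rw [← card_filter_add_card_filter_not (p := fun S => 2 * #S < k), two_mul]
  congr 1
  refine card_nbij' compl compl (fun S hS => ?_) (fun S hS => ?_) (fun S _ => compl_compl S)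
    (fun S _ => compl_compl S)
  · simp only [coe_filter, Set.mem_ofPred_eq] at hS ⊢
    exact ⟨compl_mem_balancedSets hS.1, by have := hle S; rw [hcompl]; omega⟩
  · simp only [coe_filter, Set.mem_ofPred_eq] at hS ⊢
    exact ⟨compl_mem_balancedSets hS.1, by have := hle S; rw [hcompl]; omega⟩

theorem intersecting_filter_balancedSets {k : ℕ} {v : Fin k → ℤ} (hv : ∀ i, 0 < v i) :
    (((balancedSets v).filter fun S => 2 * #S < k) : Set (Finset (Fin k))).Intersecting := by
  intro S hS T hT hST
  simp only [coe_filter, Set.mem_ofPred_eq] at hS hT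
  refine isAntichain_balancedSets hv hS.1 (compl_mem_balancedSets hT.1) (fun h => ?_)
    (subset_compl_iff_disjoint_right.2 hST)
  have : #Tᶜ = k - #T := by simp [card_compl]
  rw [← h] at this
  have := card_le_univ T
  simp only [Fintype.card_fin] at this
  omega

theorem card_perpB_le_of_odd {k : ℕ} (hk : Odd k) (hk3 : 3 ≤ k) {v : Fin k → ℤ}
    (hv : ∀ i, 0 < v i) : #(perpB v) ≤ 2 * (k - 1).choose (k / 2 - 1) := by
  rw [card_perpB_eq_card_balancedSets, card_balancedSets_eq_two_mul hk]
  gcongr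
  refine card_le_choose_of_isAntichain_of_intersecting
    ((isAntichain_balancedSets hv).subset (coe_subset.2 (filter_subset _ _)))
    (intersecting_filter_balancedSets hv) (fun S hS => ?_) (by omega) le_rfl
  have := (mem_filter.1 hS).2
  omega

theorem two_mul_choose_le_card_perpB_twoOnesP {k : ℕ} (hk : Odd k) (hk3 : 3 ≤ k) :
    2 * (k - 1).choose (k / 2 - 1) ≤ #(perpB (twoOnesP k)) := by
  rw [card_perpB_eq_card_balancedSets, card_balancedSets_eq_two_mul hk]
  gcongr
  have hkmod := Nat.odd_iff.1 hk
  set z : Fin k := ⟨0, hk.pos⟩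
  have hone : ∀ i ∈ univ.erase z, twoOnesP k i = 1 := fun i hi => by
    simp [twoOnesP, Fin.ext_iff, z] at hi ⊢
    exact hi
  have hsum : ∀ S ⊆ univ.erase z, ∑ i ∈ insert z S, twoOnesP k i = #S + 2 := fun S hS => by
    rw [sum_insert (subset_erase.1 hS).2, sum_congr rfl fun i hi => hone i (hS hi)]
    simp [twoOnesP, z, add_comm]
  have htotal : ∑ i, twoOnesP k i = k + 1 := by
    rw [← insert_erase (mem_univ z), hsum _ subset_rfl, card_erase_of_mem (mem_univ z)]
    simp only [card_univ, Fintype.card_fin]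
    omega
  calc (k - 1).choose (k / 2 - 1)
      = #((powersetCard (k / 2 - 1) (univ.erase z)).image (insert z)) := by
        rw [card_image_of_injOn, card_powersetCard, card_erase_of_mem (mem_univ z), card_univ,
          Fintype.card_fin]
        intro S hS T hT hST
        simp only [mem_coe, mem_powersetCard, subset_erase] at hS hT
        simpa [erase_insert hS.1.2, erase_insert hT.1.2] using congrArg (erase · z) hST
    _ ≤ _ := card_le_card fun S hS => by
      obtain ⟨S, hS', rfl⟩ := mem_image.1 hS
      obtain ⟨hSz, hScard⟩ := mem_powersetCard.1 hS'
      rw [mem_filter, mem_balancedSets, hsum S hSz, htotal,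
        card_insert_of_notMem (subset_erase.1 hSz).2]
      constructor <;> omega

/-- for `k ≥ 2` even, `1^k` strictly maximizes `|·^{⊥B}|` among partitions
with `k` parts not all equal; for `k ≥ 5` odd, `2·1^{k-1}` maximizes `|·^{⊥B}|` among
all partitions with `k` parts. -/
theorem stmt7 (k : ℕ) :
    (2 ≤ k → Even k → ∀ mu : Fin k → ℤ, IsPartition mu → (∃ i j, mu i ≠ mu j) →
      (perpB mu).card < (perpB (onesP k)).card) ∧
    (5 ≤ k → Odd k → ∀ mu : Fin k → ℤ, IsPartition mu →
      (perpB mu).card ≤ (perpB (twoOnesP k)).card) := by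
  refine ⟨fun _ hk mu hmu hne => ?_, fun hk5 hk mu hmu => ?_⟩
  · exact (card_perpB_lt_choose_half hk (fun i => hmu.2 i) hne).trans_le
      (choose_half_le_card_perpB_onesP hk)
  · exact (card_perpB_le_of_odd hk (by omega) (fun i => hmu.2 i)).trans
      (two_mul_choose_le_card_perpB_twoOnesP hk (by omega))

end P2834
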